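/- Let N ≥ 1 and a be integers with 1 ≤ a ≤ N, let n, l, c be nonnegative integers with l ≤ n. Then ∑_{k=l}^{n} (−1)^k / ((n−k)! · (2a/N)_{n+k+1}) · W^#_{k,l}({1}^c) = (−1)^l (Nl+a) / ((Nn+a)^{c+1} · (n−l)! · (2a/N)_{n+l+1}). -/

import Mathlib

open Finset

/-- The Pochhammer symbol (rising factorial) `(x)_n = x(x+1)⋯(x+n−1)`. -/
noncomputable def poch (x : ℝ) (n : ℕ) : ℝ := (ascPochhammer ℝ n).eval x

/-- `Δ(x,y) = 0` if `x = y` and `1` otherwise. -/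
def tri (x y : ℕ) : ℕ := if x = y then 0 else 1

/-- `W^#_{k,m}({1}^c)`: for `c ≥ 1` this is
`∑_{k ≥ l₁ ≥ ⋯ ≥ l_c ≥ m} 2^{Δ(k,l₁)+Δ(l₁,l₂)+⋯+Δ(l_c,m)} / ((Nl₁+a)⋯(Nl_c+a))`,
and for `c = 0` it is `2^{Δ(k,m)}`. -/
noncomputable def Wsharp (N a k m c : ℕ) : ℝ :=
  if c = 0 then (2 : ℝ) ^ tri k m
  else
    ∑ l : Fin c → Fin (k + 1),
      if (∀ i, m ≤ (l i : ℕ)) ∧ (∀ i j : Fin c, i ≤ j → (l j : ℕ) ≤ (l i : ℕ)) then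
        (fun ch : ℕ → ℕ =>
          (2 : ℝ) ^ (tri k (ch 0) + ∑ i ∈ Finset.range c, tri (ch i) (ch (i + 1))) /
            ∏ i : Fin c, ((N : ℝ) * (l i : ℕ) + a))
        (fun i => if h : i < c then (l ⟨i, h⟩ : ℕ) else m)
      else 0

/-! Splitting off the first index of a chain gives the recursion
`W^#_{k,l}({1}^{c+1}) = ∑_{j=l}^{k} 2^{Δ(k,j)} W^#_{j,l}({1}^c) / (Nj+a)`; after exchanging the two
summations, the inner sum is the case `c = 0` at `j`, so the identity for `c + 1` is the one for `c`
divided by `Nn+a`. The case `c = 0` follows from the telescoping identity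
`∑_{k=l}^{n} (−1)^k / ((n−k)! (x)_{n+k+1}) = (−1)^l / ((2n+x) (n−l)! (x)_{n+l})`
together with `2^{Δ(k,l)} = 2 − [k = l]` and `(2l+x)/(2n+x) = (Nl+a)/(Nn+a)` for `x = 2a/N`. -/

lemma poch_succ (x : ℝ) (n : ℕ) : poch x (n + 1) = poch x n * (x + n) :=
  ascPochhammer_succ_eval n x

lemma poch_pos {x : ℝ} (hx : 0 < x) (n : ℕ) : 0 < poch x n :=
  ascPochhammer_pos n x hx

noncomputable def alternatingCoeff (x : ℝ) (n k : ℕ) : ℝ :=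
  (-1) ^ k / ((n - k).factorial * poch x (n + k + 1))

lemma sum_Icc_alternatingCoeff {x : ℝ} (hx : 0 < x) {l n : ℕ} (hln : l ≤ n) :
    ∑ k ∈ Icc l n, alternatingCoeff x n k
      = (-1) ^ l / ((2 * n + x) * (n - l).factorial * poch x (n + l)) := by
  induction hln using Nat.decreasingInduction with
  | self =>
    have := poch_pos hx (n + n)
    rw [Icc_self, sum_singleton, alternatingCoeff, Nat.sub_self, poch_succ]
    push_cast
    field_simp
    ring
  | of_succ k hkn ih =>
    obtain ⟨d, rfl⟩ : ∃ d, n = k + d + 1 := ⟨n - k - 1, by omega⟩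
    rw [Icc_eq_cons_Ioc hkn.le, sum_cons, ← Icc_add_one_left_eq_Ioc, ih, alternatingCoeff,
      show k + d + 1 - k = d + 1 by omega, show k + d + 1 - (k + 1) = d by omega,
      show k + d + 1 + (k + 1) = k + d + 1 + k + 1 by omega, poch_succ, Nat.factorial_succ]
    have := poch_pos hx (k + d + 1 + k)
    push_cast
    field_simp
    ring

lemma sum_Icc_alternatingCoeff_mul_two_pow_tri {x : ℝ} (hx : 0 < x) {l n : ℕ} (hln : l ≤ n) :
    ∑ k ∈ Icc l n, alternatingCoeff x n k * 2 ^ tri k l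
      = (2 * l + x) / (2 * n + x) * alternatingCoeff x n l := by
  have hsplit : ∑ k ∈ Icc l n, alternatingCoeff x n k * 2 ^ tri k l
      = 2 * ∑ k ∈ Icc l n, alternatingCoeff x n k - alternatingCoeff x n l := by
    have htri : ∀ k ∈ Ioc l n, tri k l = 1 := fun k hk => if_neg (mem_Ioc.mp hk).1.ne'
    rw [Icc_eq_cons_Ioc hln, sum_cons, sum_cons, sum_congr rfl fun k hk => by rw [htri k hk],
      ← sum_mul, tri, if_pos rfl]
    ring
  rw [hsplit, sum_Icc_alternatingCoeff hx hln, alternatingCoeff, poch_succ]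
  have := poch_pos hx (n + l)
  push_cast
  field_simp
  ring

lemma two_mul_add_div_div_two_mul_add_div {N : ℝ} (hN : N ≠ 0) (a j n : ℝ) :
    (2 * j + 2 * a / N) / (2 * n + 2 * a / N) = (N * j + a) / (N * n + a) := by
  rw [show 2 * j + 2 * a / N = 2 / N * (N * j + a) by field_simp,
    show 2 * n + 2 * a / N = 2 / N * (N * n + a) by field_simp, mul_div_mul_left]
  positivity

lemma Fin.antitone_cons_iff {α : Type*} [Preorder α] {c : ℕ} {x : α} {g : Fin c → α} :
    Antitone (Fin.cons x g : Fin (c + 1) → α) ↔ (∀ i, g i ≤ x) ∧ Antitone g := by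
  refine ⟨fun h => ⟨fun i => by simpa using h (Fin.zero_le i.succ),
    fun i j hij => by simpa using h (Fin.succ_le_succ_iff.mpr hij)⟩, fun ⟨hx, hg⟩ => ?_⟩
  intro i j hij
  cases j using Fin.cases with
  | zero => rw [Fin.le_zero_iff.mp hij]
  | succ j =>
    cases i using Fin.cases with
    | zero => simpa using hx j
    | succ i => simpa using hg (Fin.succ_le_succ_iff.mp hij)

/-- The exponent `Δ(t,l₁) + Δ(l₁,l₂) + ⋯ + Δ(l_c,m)` in `Wsharp`. -/
def numSteps (t m : ℕ) {c : ℕ} (l : Fin c → ℕ) : ℕ :=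
  let ch : ℕ → ℕ := fun i => if h : i < c then l ⟨i, h⟩ else m
  tri t (ch 0) + ∑ i ∈ range c, tri (ch i) (ch (i + 1))

lemma numSteps_of_isEmpty (t m : ℕ) (l : Fin 0 → ℕ) : numSteps t m l = tri t m := by
  simp [numSteps]

lemma numSteps_cons (t m x : ℕ) {c : ℕ} (g : Fin c → ℕ) :
    numSteps t m (Fin.cons x g : Fin (c + 1) → ℕ) = tri t x + numSteps x m g := by
  have cons_zero (h : 0 < c + 1) : (Fin.cons x g : Fin (c + 1) → ℕ) ⟨0, h⟩ = x := rfl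
  have cons_succ (i : ℕ) (h : i + 1 < c + 1) :
      (Fin.cons x g : Fin (c + 1) → ℕ) ⟨i + 1, h⟩ = g ⟨i, Nat.lt_of_succ_lt_succ h⟩ := rfl
  simp only [numSteps, sum_range_succ', Nat.add_lt_add_iff_right, Nat.zero_lt_succ, dif_pos,
    cons_zero, cons_succ]
  ring

noncomputable def chainWeight (N a t m : ℕ) {c : ℕ} (l : Fin c → ℕ) : ℝ :=
  2 ^ numSteps t m l / ∏ i, ((N : ℝ) * l i + a)

lemma chainWeight_cons (N a t m x : ℕ) {c : ℕ} (g : Fin c → ℕ) :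
    chainWeight N a t m (Fin.cons x g : Fin (c + 1) → ℕ)
      = 2 ^ tri t x / ((N : ℝ) * x + a) * chainWeight N a x m g := by
  rw [chainWeight, chainWeight, numSteps_cons, pow_add, Fin.prod_univ_succ, div_mul_div_comm]
  simp only [Fin.cons_zero, Fin.cons_succ]

def chains (m t c : ℕ) : Finset (Fin c → ℕ) :=
  {l ∈ Fintype.piFinset fun _ => Icc m t | Antitone l}

lemma mem_chains_iff {m t c : ℕ} {l : Fin c → ℕ} :
    l ∈ chains m t c ↔ (∀ i, m ≤ l i ∧ l i ≤ t) ∧ Antitone l := by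
  simp [chains]

lemma cons_mem_chains_iff {m t c x : ℕ} {g : Fin c → ℕ} :
    (Fin.cons x g : Fin (c + 1) → ℕ) ∈ chains m t (c + 1) ↔ x ∈ Icc m t ∧ g ∈ chains m x c := by
  simp only [chains, mem_filter, Fintype.mem_piFinset, Fin.forall_fin_succ, Fin.cons_zero,
    Fin.cons_succ, Fin.antitone_cons_iff, mem_Icc]
  constructor
  · rintro ⟨⟨hx, hg⟩, hgx, hanti⟩
    exact ⟨hx, fun i => ⟨(hg i).1, hgx i⟩, hanti⟩
  · rintro ⟨hx, hg, hanti⟩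
    exact ⟨⟨hx, fun i => ⟨(hg i).1, (hg i).2.trans hx.2⟩⟩, fun i => (hg i).2, hanti⟩

lemma sum_chains_succ {M : Type*} [AddCommMonoid M] (m t c : ℕ) (F : (Fin (c + 1) → ℕ) → M) :
    ∑ l ∈ chains m t (c + 1), F l = ∑ x ∈ Icc m t, ∑ g ∈ chains m x c, F (Fin.cons x g) := by
  rw [sum_sigma']
  refine sum_nbij' (fun l => ⟨l 0, Fin.tail l⟩) (fun p => Fin.cons p.1 p.2) ?_ ?_ ?_ ?_ ?_
  · intro l hl
    rw [← Fin.cons_self_tail l] at hl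
    simpa using cons_mem_chains_iff.mp hl
  · rintro ⟨x, g⟩ hp
    exact cons_mem_chains_iff.mpr (by simpa using hp)
  · intro l _
    exact Fin.cons_self_tail l
  · rintro ⟨x, g⟩ _
    simp
  · intro l _
    simp

lemma Wsharp_eq_sum_chains (N a t m c : ℕ) :
    Wsharp N a t m c = ∑ l ∈ chains m t c, chainWeight N a t m l := by
  rcases Nat.eq_zero_or_pos c with rfl | hc
  · simp [Wsharp, chains, chainWeight, numSteps_of_isEmpty, Subsingleton.antitone]
  rw [Wsharp, if_neg hc.ne', ← sum_filter]
  refine sum_bij (fun l _ i => l i) (fun l hl => ?_)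
    (fun l₁ _ l₂ _ h => funext fun i => Fin.ext (congrFun h i)) (fun l hl => ?_) (fun l _ => rfl)
  · simp only [mem_filter, mem_univ, true_and] at hl
    exact mem_chains_iff.mpr ⟨fun i => ⟨hl.1 i, Nat.lt_succ_iff.mp (l i).isLt⟩, hl.2⟩
  · obtain ⟨hmem, hanti⟩ := mem_chains_iff.mp hl
    exact ⟨fun i => ⟨l i, Nat.lt_succ_of_le (hmem i).2⟩,
      mem_filter.mpr ⟨mem_univ _, fun i => (hmem i).1, fun i j hij => hanti hij⟩, rfl⟩

lemma Wsharp_zero (N a t m : ℕ) : Wsharp N a t m 0 = 2 ^ tri t m := if_pos rfl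

lemma Wsharp_succ (N a t m c : ℕ) :
    Wsharp N a t m (c + 1) = ∑ j ∈ Icc m t, 2 ^ tri t j / ((N : ℝ) * j + a) * Wsharp N a j m c := by
  simp only [Wsharp_eq_sum_chains, sum_chains_succ, chainWeight_cons, mul_sum]

lemma sum_Icc_mul_Wsharp_succ (N a l n c : ℕ) (f : ℕ → ℝ) :
    ∑ k ∈ Icc l n, f k * Wsharp N a k l (c + 1)
      = ∑ j ∈ Icc l n, Wsharp N a j l c / ((N : ℝ) * j + a) * ∑ k ∈ Icc j n, f k * 2 ^ tri k j := by
  simp only [Wsharp_succ, mul_sum]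
  rw [sum_comm' (t' := Icc l n) (s' := fun j => Icc j n) (fun k j => by
    simp only [mem_Icc]; omega)]
  exact sum_congr rfl fun j _ => sum_congr rfl fun k _ => by ring

lemma sum_Icc_alternatingCoeff_mul_Wsharp {N a : ℕ} (hN : 0 < N) (ha : 0 < a) {l n : ℕ}
    (hln : l ≤ n) (c : ℕ) :
    ∑ k ∈ Icc l n, alternatingCoeff (2 * a / N) n k * Wsharp N a k l c
      = (N * l + a) / (N * n + a) ^ (c + 1) * alternatingCoeff (2 * a / N) n l := by
  have hx : 0 < 2 * (a : ℝ) / N := by positivity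
  have base : ∀ j ≤ n, ∑ k ∈ Icc j n, alternatingCoeff (2 * a / N) n k * 2 ^ tri k j
      = (N * j + a) / (N * n + a) * alternatingCoeff (2 * a / N) n j := fun j hjn => by
    rw [sum_Icc_alternatingCoeff_mul_two_pow_tri hx hjn,
      two_mul_add_div_div_two_mul_add_div (by positivity)]
  induction c with
  | zero => simpa only [Wsharp_zero, zero_add, pow_one] using base l hln
  | succ c ih =>
    rw [sum_Icc_mul_Wsharp_succ, pow_succ, ← div_div, div_mul_eq_mul_div, ← ih, sum_div]
    refine sum_congr rfl fun j hj => ?_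
    have : (0 : ℝ) < N * j + a := by positivity
    rw [base j (mem_Icc.mp hj).2]
    field_simp

/-- Lemma 2.2: for `1 ≤ a ≤ N` and `l ≤ n`,
`∑_{k=l}^{n} (−1)^k/((n−k)!·(2a/N)_{n+k+1}) · W^#_{k,l}({1}^c)
  = (−1)^l (Nl+a) / ((Nn+a)^{c+1}·(n−l)!·(2a/N)_{n+l+1})`. -/
theorem sum_neg_one_pow_Wsharp_div_factorial_poch
    (N a : ℕ) (h1 : 1 ≤ a) (h2 : a ≤ N) (n l c : ℕ) (hln : l ≤ n) :
    ∑ k ∈ Finset.Icc l n,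
        (-1 : ℝ) ^ k /
            ((n - k).factorial * poch (2 * (a : ℝ) / N) (n + k + 1)) *
          Wsharp N a k l c
      = (-1 : ℝ) ^ l * ((N : ℝ) * l + a) /
          (((N : ℝ) * n + a) ^ (c + 1) * (n - l).factorial *
            poch (2 * (a : ℝ) / N) (n + l + 1)) := by
  refine (sum_Icc_alternatingCoeff_mul_Wsharp (h1.trans h2) h1 hln c).trans ?_
  rw [alternatingCoeff]
  field_simp
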